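/- arXiv:2509.23884 — 3 statements merged into one kernel-verified Lean document; each statement's English description precedes it below -/
import Mathlib

section
/- Let n, k, s, t be positive integers with k < n and s < n. There exists an (n,k,s)-configuration that is t-admissible if and only if n·t ≤ k·s. -/
/-!
Necessity is double counting: summing the window counts over all `n` starting positions
counts every `A` exactly `s` times, so `n * t ≤ s * k`.

Sufficiency uses the mechanical (Sturmian) word of slope `k / n`: position `j` is an `A`
iff `⌊(j + 1) k / n⌋ > ⌊j k / n⌋`. Since `k ≤ n` this floor sequence increases by at most
one per step, so a window of length `s` starting at `m` holds `⌊(m + s) k / n⌋ - ⌊m k / n⌋`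
letters `A`, which is at least `⌊s k / n⌋ ≥ t` by superadditivity of the floor.
-/

open Finset

theorem Finset.sum_card_filter_add_eq {G ι : Type*} [AddGroup G] [Fintype G] (p : G → Prop)
    [DecidablePred p] (J : Finset ι) (v : ι → G) :
    ∑ i, #{j ∈ J | p (i + v j)} = #J * #{i | p i} := by
  calc ∑ i, #{j ∈ J | p (i + v j)} = ∑ i, ∑ j ∈ J, (if p (i + v j) then 1 else 0) := by
        simp only [card_filter]
    _ = ∑ j ∈ J, ∑ i, (if p (i + v j) then 1 else 0) := sum_comm
    _ = ∑ _j ∈ J, ∑ i, (if p i then 1 else 0) :=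
        sum_congr rfl fun j _ => Equiv.sum_comp (Equiv.addRight (v j)) fun i => if p i then 1 else 0
    _ = #J * #{i | p i} := by rw [sum_const, smul_eq_mul, card_filter]

theorem card_mul_le_of_forall_le_card_filter_add {G ι : Type*} [AddGroup G] [Fintype G]
    (p : G → Prop) [DecidablePred p] (J : Finset ι) (v : ι → G) {t : ℕ}
    (h : ∀ i, t ≤ #{j ∈ J | p (i + v j)}) :
    Fintype.card G * t ≤ #J * #{i | p i} := by
  calc Fintype.card G * t = ∑ _i : G, t := by rw [sum_const, card_univ, smul_eq_mul]
    _ ≤ ∑ i, #{j ∈ J | p (i + v j)} := sum_le_sum fun i _ => h i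
    _ = #J * #{i | p i} := Finset.sum_card_filter_add_eq p J v

theorem ZMod.card_filter_eq_card_filter_range (n : ℕ) [NeZero n] (p : ZMod n → Prop)
    [DecidablePred p] :
    #{x | p x} = #((range n).filter fun j : ℕ => p j) := by
  refine card_nbij' ZMod.val Nat.cast ?_ ?_ ?_ ?_
  · intro x hx
    simp_all [ZMod.val_lt]
  · intro j hj
    simp_all
  · intro x _
    exact ZMod.natCast_zmod_val x
  · intro j hj
    simp_all [Nat.mod_eq_of_lt]

theorem card_filter_lt_succ_eq_sub {f : ℕ → ℕ} (hf : Monotone f)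
    (hstep : ∀ a, f (a + 1) ≤ f a + 1) (m L : ℕ) :
    #{j ∈ range L | f (m + j) < f (m + j + 1)} = f (m + L) - f m := by
  induction L with
  | zero => simp
  | succ L ih =>
    have hmL : f m ≤ f (m + L) := hf (Nat.le_add_right m L)
    have hL : f (m + L) ≤ f (m + L + 1) := hf (Nat.le_succ _)
    have := hstep (m + L)
    rw [range_add_one, filter_insert, ← add_assoc]
    split_ifs with hc
    · rw [card_insert_of_notMem (by simp), ih]
      omega
    · rw [ih]
      omega

section MechanicalWord

variable {n k : ℕ}

theorem succ_mul_div_le_mul_div_add_one (hn : 0 < n) (hkn : k ≤ n) (a : ℕ) :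
    (a + 1) * k / n ≤ a * k / n + 1 :=
  calc (a + 1) * k / n = (a * k + k) / n := by rw [add_one_mul]
    _ ≤ (a * k + n) / n := Nat.div_le_div_right (by omega)
    _ = a * k / n + 1 := Nat.add_div_right _ hn

theorem add_mul_mul_div_eq (hn : 0 < n) (a q : ℕ) :
    (a + n * q) * k / n = a * k / n + q * k := by
  rw [show (a + n * q) * k = a * k + n * (q * k) by ring, Nat.add_mul_div_left _ _ hn]

def mechanicalWord (n k : ℕ) (x : ZMod n) : Bool :=
  decide (x.val * k / n < (x.val + 1) * k / n)

theorem mechanicalWord_natCast [NeZero n] (m : ℕ) :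
    mechanicalWord n k m = decide (m * k / n < (m + 1) * k / n) := by
  have hn : 0 < n := Nat.pos_of_neZero n
  have h₀ : m * k / n = m % n * k / n + m / n * k := by
    conv_lhs => rw [← Nat.mod_add_div m n]
    exact add_mul_mul_div_eq hn _ _
  have h₁ : (m + 1) * k / n = (m % n + 1) * k / n + m / n * k := by
    rw [← add_mul_mul_div_eq hn]
    have := Nat.mod_add_div m n
    congr 2
    omega
  simp only [mechanicalWord, ZMod.val_natCast, h₀, h₁, Nat.add_lt_add_iff_right]

theorem card_filter_mechanicalWord_add [NeZero n] (hkn : k ≤ n) (m s : ℕ) :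
    #((range s).filter fun j : ℕ => mechanicalWord n k (m + j) = true) =
      (m + s) * k / n - m * k / n := by
  have hn : 0 < n := Nat.pos_of_neZero n
  have hmono : Monotone fun j => j * k / n :=
    fun a b h => Nat.div_le_div_right (Nat.mul_le_mul_right k h)
  rw [← card_filter_lt_succ_eq_sub hmono (succ_mul_div_le_mul_div_add_one hn hkn) m s]
  congr 1
  refine filter_congr fun j _ => ?_
  rw [← Nat.cast_add, mechanicalWord_natCast, decide_eq_true_iff]

theorem card_filter_mechanicalWord [NeZero n] (hkn : k ≤ n) :
    #{x | mechanicalWord n k x = true} = k := by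
  have h := card_filter_mechanicalWord_add hkn 0 n
  simp only [Nat.cast_zero, zero_add, zero_mul, Nat.zero_div, Nat.sub_zero] at h
  rw [ZMod.card_filter_eq_card_filter_range, h, Nat.mul_div_cancel_left k (Nat.pos_of_neZero n)]

theorem le_card_filter_mechanicalWord_add [NeZero n] (hkn : k ≤ n) (i : ZMod n) (s : ℕ) :
    s * k / n ≤ #((range s).filter fun j : ℕ => mechanicalWord n k (i + j) = true) := by
  rw [← ZMod.natCast_zmod_val i, card_filter_mechanicalWord_add hkn, add_mul]
  have : i.val * k / n + s * k / n ≤ (i.val * k + s * k) / n := Nat.div_add_div_le_add_div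
  omega

end MechanicalWord

theorem exists_admissible_configuration_iff_general (n k s t : ℕ) [NeZero n]
    (hkn : k < n) :
    (∃ c : ZMod n → Bool,
        (Finset.univ.filter (fun i => c i = true)).card = k ∧
        ∀ i : ZMod n,
          t ≤ ((Finset.range s).filter (fun (j : ℕ) => c (i + (j : ZMod n)) = true)).card)
      ↔ n * t ≤ k * s := by
  constructor
  · rintro ⟨c, hcard, hwin⟩
    have := card_mul_le_of_forall_le_card_filter_add (fun i => c i = true) (range s) Nat.cast hwin
    rwa [ZMod.card, card_range, hcard, mul_comm s] at this
  · intro h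
    refine ⟨mechanicalWord n k, card_filter_mechanicalWord hkn.le, fun i => ?_⟩
    refine le_trans ?_ (le_card_filter_mechanicalWord_add hkn.le i s)
    rw [Nat.le_div_iff_mul_le (Nat.pos_of_neZero n)]
    linarith

/-- An `(n,k,s)`-configuration `c : ZMod n → Bool` (with exactly `k` positions `true`)
is `t`-admissible iff every window of `s` consecutive positions contains at least `t`
positions equal to `true`. The configuration exists iff `n * t ≤ k * s`. -/
theorem exists_admissible_configuration_iff (n k s t : ℕ) [NeZero n]
    (hk : 0 < k) (hs : 0 < s) (ht : 0 < t) (hkn : k < n) (hsn : s < n) :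
    (∃ c : ZMod n → Bool,
        (Finset.univ.filter (fun i => c i = true)).card = k ∧
        ∀ i : ZMod n,
          t ≤ ((Finset.range s).filter (fun (j : ℕ) => c (i + (j : ZMod n)) = true)).card)
      ↔ n * t ≤ k * s :=
  exists_admissible_configuration_iff_general n k s t hkn
end

section
/- Let n, k, s, t be positive integers with k < n and s < n, and suppose n·t ≤ k·s. Then there exists a t-admissible (n,k,s)-configuration; that is, there exists a function c : ZMod n → Bool with exactly k positions equal to true such that every set of s consecutive positions contains at least t positions equal to true. -/
/-! The witness is the lower mechanical word of slope `k / n`: position `m` carries `A` exactly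
when `⌊m k / n⌋` jumps between `m` and `m + 1`, so a window of length `s` starting at `m`
carries `⌊(m + s) k / n⌋ - ⌊m k / n⌋ ≥ ⌊s k / n⌋ ≥ t` letters `A`. -/

open Finset

namespace Nat

variable {f : ℕ → ℕ}

lemma card_filter_lt_succ_eq_tsub (hf : Monotone f) (hstep : ∀ m, f (m + 1) ≤ f m + 1)
    (a b : ℕ) : #{j ∈ range b | f (a + j) < f (a + j + 1)} = f (a + b) - f a := by
  have hg : Monotone fun j => f (a + j) := hf.comp fun _ _ h => Nat.add_le_add_left h a
  have htel := sum_range_tsub hg b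
  rw [add_zero] at htel
  rw [card_filter, ← htel]
  refine sum_congr rfl fun j _ => ?_
  have := hf (le_add_right (a + j) 1)
  have := hstep (a + j)
  rw [← add_assoc]
  split_ifs <;> omega

lemma lt_succ_mod_iff {n k : ℕ} (hf : ∀ m, f (m + n) = f m + k) (m : ℕ) :
    f (m % n) < f (m % n + 1) ↔ f m < f (m + 1) := by
  have shift : ∀ r q, f (r + q * n) = f r + q * k := by
    intro r q
    induction q with
    | zero => simp
    | succ q ih => rw [add_mul, one_mul, ← add_assoc, hf, ih, add_mul, one_mul, add_assoc]
  have h0 := shift (m % n) (m / n)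
  have h1 := shift (m % n + 1) (m / n)
  rw [mod_add_div' m n] at h0
  rw [add_right_comm, mod_add_div' m n] at h1
  omega

lemma succ_mul_div_le_mul_div_add_one {n k : ℕ} (hkn : k ≤ n) (m : ℕ) :
    (m + 1) * k / n ≤ m * k / n + 1 := by
  rcases n.eq_zero_or_pos with rfl | hn
  · simp
  calc (m + 1) * k / n ≤ (m * k + n) / n := Nat.div_le_div_right (by rw [add_one_mul]; omega)
    _ = m * k / n + 1 := add_div_right _ hn

end Nat

lemma ZMod.card_filter_univ_eq_card_filter_range {n : ℕ} [NeZero n] (p : ZMod n → Prop)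
    [DecidablePred p] : #{i | p i} = #((range n).filter fun j : ℕ => p j) := by
  refine card_nbij' ZMod.val Nat.cast ?_ ?_ ?_ ?_ <;> intro x hx <;>
    simp_all [ZMod.val_lt, Nat.mod_eq_of_lt]

theorem exists_admissible_configuration_of_le_general (n k s t : ℕ) [NeZero n]
    (hkn : k < n)
    (h : n * t ≤ k * s) :
    ∃ c : ZMod n → Bool,
      (Finset.univ.filter (fun i => c i = true)).card = k ∧
      ∀ i : ZMod n,
        t ≤ ((Finset.range s).filter (fun (j : ℕ) => c (i + (j : ZMod n)) = true)).card := by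
  have hn : 0 < n := Nat.pos_of_neZero n
  set f : ℕ → ℕ := fun m => m * k / n
  have hf_mono : Monotone f := fun a b hab => Nat.div_le_div_right (Nat.mul_le_mul_right k hab)
  have hf_step : ∀ m, f (m + 1) ≤ f m + 1 := Nat.succ_mul_div_le_mul_div_add_one hkn.le
  have hf_period : ∀ m, f (m + n) = f m + k := fun m => by
    simp only [f]; rw [add_mul, mul_comm n k, Nat.add_mul_div_right _ _ hn]
  let c : ZMod n → Bool := fun i => decide (f i.val < f (i.val + 1))
  have hc : ∀ m : ℕ, c m = true ↔ f m < f (m + 1) := fun m => by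
    simpa [c, ZMod.val_natCast] using Nat.lt_succ_mod_iff hf_period m
  refine ⟨c, ?_, fun i => ?_⟩
  · rw [ZMod.card_filter_univ_eq_card_filter_range, filter_congr fun j _ => hc j]
    simpa [f, Nat.mul_div_cancel_left k hn] using
      Nat.card_filter_lt_succ_eq_tsub hf_mono hf_step 0 n
  · have hi : ∀ j : ℕ, i + (j : ZMod n) = ((i.val + j : ℕ) : ZMod n) := by simp
    rw [filter_congr fun j _ => by rw [hi, hc], Nat.card_filter_lt_succ_eq_tsub hf_mono hf_step]
    have hsuper : f i.val + f s ≤ f (i.val + s) := by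
      simp only [f, add_mul]; exact Nat.div_add_div_le_add_div
    have hts : t ≤ f s := (Nat.le_div_iff_mul_le hn).mpr (by rw [mul_comm]; linarith)
    omega

/-- If `n * t ≤ k * s`, then there exists a `t`-admissible `(n,k,s)`-configuration:
a function `c : ZMod n → Bool` with exactly `k` positions `true` such that every window
of `s` consecutive positions contains at least `t` positions equal to `true`. -/
theorem exists_admissible_configuration_of_le (n k s t : ℕ) [NeZero n]
    (hk : 0 < k) (hs : 0 < s) (ht : 0 < t) (hkn : k < n) (hsn : s < n)
    (h : n * t ≤ k * s) :
    ∃ c : ZMod n → Bool,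
      (Finset.univ.filter (fun i => c i = true)).card = k ∧
      ∀ i : ZMod n,
        t ≤ ((Finset.range s).filter (fun (j : ℕ) => c (i + (j : ZMod n)) = true)).card :=
  exists_admissible_configuration_of_le_general n k s t hkn h
end

section
/- Let n > k ≥ 1 be coprime integers and let [μ₁, …, μ_t] be the continued fraction expansion of n/k. Then the Smith word S_t built from the quotients [μ₁−1, μ₂, …, μ_t] is a list of length n containing exactly k ones. -/
/-- Value of a (finite) continued fraction with the given list of quotients:
`cfVal [μ₁, …, μ_t] = μ₁ + 1/(μ₂ + 1/(⋯ + 1/μ_t))`. -/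
def cfVal : List ℕ → ℚ
  | [] => 0
  | a :: l => (a : ℚ) + (cfVal l)⁻¹

/-- The Smith word built from the quotients `[μ₁ - 1, μ₂, …, μ_t]`, where
`[μ₁, …, μ_t]` is the input list: `S₁ = 0^(μ₁-1) ++ [1]`, `S₂ = S₁^μ₂ ++ [0]`,
and `S_j = S_{j-1}^(μ_j) ++ S_{j-2}` for `j ≥ 3` (letters `1 = A`, `0 = B`). -/
def smithWord : List ℕ → List ℤ
  | [] => []
  | μ₁ :: rest =>
    (rest.foldl (fun (p : List ℤ × List ℤ) (μ : ℕ) =>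
        (p.2, (List.replicate μ p.2).flatten ++ p.1))
      (([0] : List ℤ), List.replicate (μ₁ - 1) (0 : ℤ) ++ [1])).2

/-!
Both the length and the number of `1`s are additive on words, so along the recursion
`S_j = S_{j-1}^(μ_j) ++ S_{j-2}` each of them satisfies the continuant recursion
`x_j = μ_j x_{j-1} + x_{j-2}`. Started from `(|S₀|, |S₁|) = (1, μ₁)` (with `S₀ = [0]`) it
produces the numerators of the convergents of `[μ₁, …, μ_t]`; started from `(0, 1)` it
produces their denominators. The last convergent is `n/k` in lowest terms, since numerator and
denominator of a continued fraction with positive quotients are coprime.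
-/

def cfNumDen : List ℕ → ℕ × ℕ
  | [] => (1, 0)
  | a :: l => (a * (cfNumDen l).1 + (cfNumDen l).2, (cfNumDen l).1)

lemma cfNumDen_fst_pos {l : List ℕ} (hpos : ∀ a ∈ l, 1 ≤ a) : 0 < (cfNumDen l).1 := by
  induction l with
  | nil => simp [cfNumDen]
  | cons x l ih =>
    have hx : 0 < x := hpos x List.mem_cons_self
    have hl : 0 < (cfNumDen l).1 := ih fun a ha => hpos a (List.mem_cons_of_mem x ha)
    simp only [cfNumDen]
    positivity

lemma cfNumDen_snd_pos {l : List ℕ} (hne : l ≠ []) (hpos : ∀ a ∈ l, 1 ≤ a) :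
    0 < (cfNumDen l).2 := by
  obtain ⟨x, l, rfl⟩ := List.exists_cons_of_ne_nil hne
  exact cfNumDen_fst_pos fun a ha => hpos a (List.mem_cons_of_mem x ha)

lemma coprime_cfNumDen (l : List ℕ) : Nat.Coprime (cfNumDen l).1 (cfNumDen l).2 := by
  induction l with
  | nil => simp [cfNumDen]
  | cons x l ih =>
    simp only [cfNumDen]
    rw [Nat.add_comm]
    exact (Nat.coprime_add_mul_right_left _ _ _).mpr ih.symm

lemma inv_cfVal {l : List ℕ} (hpos : ∀ a ∈ l, 1 ≤ a) :
    (cfVal l)⁻¹ = ((cfNumDen l).2 : ℚ) / (cfNumDen l).1 := by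
  induction l with
  | nil => simp [cfVal, cfNumDen]
  | cons x l ih =>
    have hl : ((cfNumDen l).1 : ℚ) ≠ 0 :=
      Nat.cast_ne_zero.mpr (cfNumDen_fst_pos fun a ha => hpos a (List.mem_cons_of_mem x ha)).ne'
    rw [cfVal, ih fun a ha => hpos a (List.mem_cons_of_mem x ha), cfNumDen]
    push_cast
    rw [add_div' _ _ _ hl, inv_div]

lemma cfVal_eq_div {l : List ℕ} (hpos : ∀ a ∈ l, 1 ≤ a) :
    cfVal l = ((cfNumDen l).1 : ℚ) / (cfNumDen l).2 := by
  rw [← inv_inv (cfVal l), inv_cfVal hpos, inv_div]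

lemma cfNumDen_eq_of_cfVal_eq {l : List ℕ} (hne : l ≠ []) (hpos : ∀ a ∈ l, 1 ≤ a)
    {n k : ℕ} (hk : 0 < k) (hcop : Nat.Coprime n k) (hval : cfVal l = (n : ℚ) / k) :
    cfNumDen l = (n, k) := by
  have hdiv :
      (((cfNumDen l).1 : ℤ) : ℚ) / ((cfNumDen l).2 : ℤ) = ((n : ℤ) : ℚ) / (k : ℤ) := by
    push_cast
    rw [← cfVal_eq_div hpos, hval]
  obtain ⟨hnum, hden⟩ := Rat.div_int_inj (by exact_mod_cast cfNumDen_snd_pos hne hpos)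
    (by exact_mod_cast hk) (by simpa using coprime_cfNumDen l) (by simpa using hcop) hdiv
  exact Prod.ext (by exact_mod_cast hnum) (by exact_mod_cast hden)

def smithStep (p : List ℤ × List ℤ) (μ : ℕ) : List ℤ × List ℤ :=
  (p.2, (List.replicate μ p.2).flatten ++ p.1)

def continuantStep (p : ℕ × ℕ) (μ : ℕ) : ℕ × ℕ :=
  (p.2, μ * p.2 + p.1)

lemma smithWord_cons (x : ℕ) (l : List ℕ) :
    smithWord (x :: l) = (l.foldl smithStep ([0], List.replicate (x - 1) 0 ++ [1])).2 :=
  rfl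

lemma map_flatten_replicate {f : List ℤ → ℕ} (hf : ∀ u v, f (u ++ v) = f u + f v)
    (μ : ℕ) (w : List ℤ) :
    f (List.replicate μ w).flatten = μ * f w := by
  induction μ with
  | zero => simpa using hf [] []
  | succ m ih => rw [List.replicate_succ', List.flatten_concat, hf, ih, Nat.succ_mul]

lemma map_foldl_smithStep {f : List ℤ → ℕ} (hf : ∀ u v, f (u ++ v) = f u + f v)
    (l : List ℕ) (p : List ℤ × List ℤ) :
    Prod.map f f (l.foldl smithStep p) = l.foldl continuantStep (Prod.map f f p) := by
  induction l generalizing p with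
  | nil => rfl
  | cons μ l ih =>
    rw [List.foldl_cons, List.foldl_cons, ih]
    congr 1
    simp only [smithStep, continuantStep, Prod.map, hf, map_flatten_replicate hf]

lemma foldl_continuantStep_snd (l : List ℕ) (a b : ℕ) :
    (l.foldl continuantStep (a, b)).2 = b * (cfNumDen l).1 + a * (cfNumDen l).2 := by
  induction l generalizing a b with
  | nil => simp [cfNumDen]
  | cons x l ih =>
    rw [List.foldl_cons, continuantStep, ih, cfNumDen]
    ring

lemma length_smithWord_cons {x : ℕ} (hx : 1 ≤ x) (l : List ℕ) :
    (smithWord (x :: l)).length = (cfNumDen (x :: l)).1 := by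
  have h := congrArg Prod.snd <|
    map_foldl_smithStep (fun _ _ => List.length_append) l ([0], List.replicate (x - 1) 0 ++ [1])
  simp only [Prod.map, List.length_append, List.length_replicate, List.length_singleton,
    Nat.sub_add_cancel hx] at h
  rw [smithWord_cons, h, foldl_continuantStep_snd, cfNumDen]
  ring

lemma count_one_smithWord (μ : List ℕ) : (smithWord μ).count 1 = (cfNumDen μ).2 := by
  cases μ with
  | nil => rfl
  | cons x l =>
    have h := congrArg Prod.snd <|
      map_foldl_smithStep (fun _ _ => List.count_append (a := 1)) l
        ([0], List.replicate (x - 1) 0 ++ [1])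
    simp only [Prod.map, List.count_append, List.count_replicate, List.count_singleton] at h
    rw [smithWord_cons, h, foldl_continuantStep_snd, cfNumDen]
    simp

theorem smithWord_length_count_general (n k : ℕ) (hk : 1 ≤ k)
    (hcop : Nat.Coprime n k) (μ : List ℕ) (hne : μ ≠ [])
    (hpos : ∀ a ∈ μ, 1 ≤ a)
    (hval : cfVal μ = (n : ℚ) / k) :
    (smithWord μ).length = n ∧ (smithWord μ).count 1 = k := by
  have hnd := cfNumDen_eq_of_cfVal_eq hne hpos hk hcop hval
  obtain ⟨x, l, rfl⟩ := List.exists_cons_of_ne_nil hne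
  rw [length_smithWord_cons (hpos x List.mem_cons_self), count_one_smithWord, hnd]
  exact ⟨rfl, rfl⟩

/-- For coprime `n > k ≥ 1` with continued fraction expansion `n/k = [μ₁, …, μ_t]`,
the Smith word built from `[μ₁ - 1, μ₂, …, μ_t]` has length `n` and contains exactly
`k` ones. -/
theorem smithWord_length_count (n k : ℕ) (hk : 1 ≤ k) (hkn : k < n)
    (hcop : Nat.Coprime n k) (μ : List ℕ) (hne : μ ≠ [])
    (hpos : ∀ a ∈ μ, 1 ≤ a) (hcanon : μ.length = 1 ∨ μ.getLast! ≠ 1)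
    (hval : cfVal μ = (n : ℚ) / k) :
    (smithWord μ).length = n ∧ (smithWord μ).count 1 = k :=
  smithWord_length_count_general n k hk hcop μ hne hpos hval
end
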